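/- Let E be a finite set and let f : 2^E → ℤ be submodular. Then the extended polymatroid EP_f := {x ∈ ℝ^E | x(U) ≤ f(U) for all U ⊆ E} satisfies condition (★): for every nonnegative integer k, every r ∈ {0,…,k} and every integer vector w ∈ ℤ^E, the set r·EP_f ∩ (w − (k−r)·EP_f) is box-integer. -/

import Mathlib

open Finset Pointwise

variable {ι : Type*} [Fintype ι]

/-- A vector is an integer vector if each coordinate is an integer. -/
def IsIntegerVec (x : ι → ℝ) : Prop := ∀ i, ∃ z : ℤ, x i = (z : ℝ)

/-- `F` is a (nonempty, exposed) face of `P`: the set of points of `P` maximizing some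
linear functional `⟨c, ·⟩` over `P`. -/
def IsFace (P F : Set (ι → ℝ)) : Prop :=
  F.Nonempty ∧ ∃ c : ι → ℝ, F = {x ∈ P | ∀ y ∈ P, ∑ i, c i * y i ≤ ∑ i, c i * x i}

/-- `P` is an integer polyhedron: every (nonempty) face contains an integer vector. -/
def IsIntegerPolyhedron (P : Set (ι → ℝ)) : Prop :=
  ∀ F : Set (ι → ℝ), IsFace P F → ∃ x ∈ F, IsIntegerVec x

/-- `Q` is box-integer: its intersection with any integer box is an integer polyhedron. -/
def IsBoxInteger (Q : Set (ι → ℝ)) : Prop :=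
  ∀ c d : ι → ℤ, (∀ i, c i ≤ d i) →
    IsIntegerPolyhedron {x ∈ Q | ∀ i, (c i : ℝ) ≤ x i ∧ x i ≤ (d i : ℝ)}

/-- Condition (★): for all `0 ≤ r ≤ k` and integer `w`, the set `rP ∩ (w - (k-r)P)`
is box-integer. -/
def ConditionStar (P : Set (ι → ℝ)) : Prop :=
  ∀ k r : ℕ, r ≤ k → ∀ w : ι → ℤ,
    IsBoxInteger (((r : ℝ) • P) ∩
      ((fun y => (fun i => (w i : ℝ)) - y) '' (((k - r : ℕ) : ℝ) • P)))

/-- The Integer Carathéodory Property: every integer vector `w ∈ kP` is a nonnegative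
integer combination, with coefficients summing to `k`, of affinely independent integer
vectors in `P`. -/
def HasICP (P : Set (ι → ℝ)) : Prop :=
  ∀ k : ℕ, 0 < k → ∀ w : ι → ℤ, (fun i => (w i : ℝ)) ∈ (k : ℝ) • P →
    ∃ (t : ℕ) (x : Fin t → (ι → ℝ)) (c : Fin t → ℕ),
      (∀ i, x i ∈ P) ∧ (∀ i, IsIntegerVec (x i)) ∧ AffineIndependent ℝ x ∧
      (∀ i, 0 < c i) ∧ (∑ i, c i = k) ∧ (fun j => (w j : ℝ)) = ∑ i, (c i : ℝ) • x i

/-- A function on subsets of a finite set is submodular. -/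
def Submodular {E : Type*} [DecidableEq E] (f : Finset E → ℤ) : Prop :=
  ∀ A B : Finset E, f (A ∪ B) + f (A ∩ B) ≤ f A + f B

/-!
The box-intersected set `{x | x ∈ EP_g, w - x ∈ EP_h, c ≤ x ≤ d}`, for submodular `g`, `h` and
integer `w`, is compact, so each of its faces contains one of its extreme points, and it suffices
to show that extreme points are integral. At a non-integral point `z`, the tight sets of either
system of constraints form a lattice on which `z` has integral sums. The atoms into which such a
lattice cuts the fractional coordinates of `z` therefore all have at least two elements, so each
lattice imposes at most half as many linear conditions as there are fractional coordinates; if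
together they impose exactly as many, both partition the fractional coordinates and one condition
is redundant. This yields a direction `v ≠ 0` vanishing on the integral coordinates and on every tight set;
moving along `±v` keeps `z` in the set, so `z` is not extreme. Finally
`r • EP_f ∩ (w - (k - r) • EP_f)` is of this form with `g = r f` and `h = (k - r) f` when
`0 < r < k`, and consists of a single integral point or is empty when `r = 0` or `r = k`.
-/

open Filter Topology

theorem IsFace.isExposed {P F : Set (ι → ℝ)} (h : IsFace P F) : IsExposed ℝ P F := by
  obtain ⟨-, c, rfl⟩ := h
  refine fun _ => ⟨∑ i, c i • ContinuousLinearMap.proj i, ?_⟩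
  simp [smul_eq_mul]

theorem IsIntegerPolyhedron.of_forall_isIntegerVec {P : Set (ι → ℝ)}
    (h : ∀ x ∈ P, IsIntegerVec x) : IsIntegerPolyhedron P := by
  rintro F ⟨⟨x, hx⟩, c, rfl⟩
  exact ⟨x, hx, h x hx.1⟩

theorem IsIntegerPolyhedron.of_extremePoints {P : Set (ι → ℝ)} (hP : IsCompact P)
    (h : ∀ x ∈ P.extremePoints ℝ, IsIntegerVec x) : IsIntegerPolyhedron P := by
  intro F hF
  obtain ⟨x, hx⟩ := (hF.isExposed.isCompact hP).extremePoints_nonempty hF.1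
  exact ⟨x, hx.1, h x (hF.isExposed.isExtreme.extremePoints_subset_extremePoints hx)⟩

theorem IsBoxInteger.of_forall_isIntegerVec {Q : Set (ι → ℝ)} (h : ∀ x ∈ Q, IsIntegerVec x) :
    IsBoxInteger Q :=
  fun _ _ _ => .of_forall_isIntegerVec fun x hx => h x hx.1

theorem isCompact_sep_box {E : Type*} {Q : Set (E → ℝ)} (hQ : IsClosed Q) (c d : E → ℝ) :
    IsCompact {x ∈ Q | ∀ i, c i ≤ x i ∧ x i ≤ d i} := by
  have : {x ∈ Q | ∀ i, c i ≤ x i ∧ x i ≤ d i} = Q ∩ Set.Icc c d := by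
    ext x
    simp only [Set.mem_ofPred_eq, Set.mem_inter_iff, Set.mem_Icc, Pi.le_def, forall_and]
  exact this ▸ isCompact_Icc.inter_left hQ

theorem eq_zero_of_mem_extremePoints {V : Type*} [AddCommGroup V] [Module ℝ V] {A : Set V}
    {z v : V} (hz : z ∈ A.extremePoints ℝ) (h : ∀ᶠ t in 𝓝 (0 : ℝ), z + t • v ∈ A) : v = 0 := by
  obtain ⟨ε, hε, hA⟩ := Metric.eventually_nhds_iff.mp h
  have hmem : ∀ t, |t| < ε → z + t • v ∈ A := fun t ht => hA (by simpa using ht)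
  have hseg : z ∈ openSegment ℝ (z + (ε / 2) • v) (z + (-(ε / 2)) • v) :=
    ⟨2⁻¹, 2⁻¹, by norm_num, by norm_num, by norm_num, by module⟩
  have := hz.2 (hmem _ (by rw [abs_of_pos (by positivity)]; linarith))
    (hmem _ (by rw [abs_neg, abs_of_pos (by positivity)]; linarith)) hseg
  simpa [hε.ne'] using this

theorem eventually_add_mul_le {a b s : ℝ} (hab : a ≤ b) (hs : a = b → s = 0) :
    ∀ᶠ t in 𝓝 (0 : ℝ), a + t * s ≤ b := by
  rcases hab.lt_or_eq with hlt | heq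
  · have : Tendsto (fun t => a + t * s) (𝓝 0) (𝓝 a) :=
      Continuous.tendsto' (by fun_prop) 0 a (by simp)
    exact (this.eventually (gt_mem_nhds hlt)).mono fun _ => le_of_lt
  · simp [hs heq, heq]

theorem eventually_add_smul_mem_box {c d : ι → ℤ} {x v : ι → ℝ}
    (hx : ∀ i, (c i : ℝ) ≤ x i ∧ x i ≤ d i) (hv : ∀ i, (∃ m : ℤ, x i = m) → v i = 0) :
    ∀ᶠ t in 𝓝 (0 : ℝ), ∀ i, (c i : ℝ) ≤ (x + t • v) i ∧ (x + t • v) i ≤ d i := by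
  refine eventually_all.mpr fun i => ?_
  have hlow := eventually_add_mul_le (a := -x i) (s := -v i) (neg_le_neg (hx i).1)
    fun h => by simp [hv i ⟨c i, neg_inj.mp h⟩]
  filter_upwards [hlow, eventually_add_mul_le (hx i).2 fun h => hv i ⟨d i, h⟩] with t h₁ h₂
  simp only [Pi.add_apply, Pi.smul_apply, smul_eq_mul]
  constructor <;> linarith

section Packings
variable {E : Type*}

theorem exists_ne_zero_forall_sum_eq_zero [Fintype E] {K : Type*} [Field K]
    (𝒰 : Finset (Finset E)) (h𝒰 : #𝒰 < Fintype.card E) :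
    ∃ d : E → K, d ≠ 0 ∧ ∀ U ∈ 𝒰, ∑ e ∈ U, d e = 0 := by
  let L : (E → K) →ₗ[K] (𝒰 → K) := LinearMap.pi fun U => ∑ e ∈ U.1, LinearMap.proj e
  have hker : LinearMap.ker L ≠ ⊥ := LinearMap.ker_ne_bot_of_finrank_lt (by simpa using h𝒰)
  obtain ⟨d, hd, hd0⟩ := (Submodule.ne_bot_iff _).mp hker
  refine ⟨d, hd0, fun U hU => ?_⟩
  simpa [L] using congrFun (LinearMap.mem_ker.mp hd) ⟨U, hU⟩

theorem two_mul_card_le_card_biUnion [DecidableEq E] {𝒞 : Finset (Finset E)}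
    (hdisj : (𝒞 : Set (Finset E)).PairwiseDisjoint id) (htwo : ∀ C ∈ 𝒞, 2 ≤ #C) :
    2 * #𝒞 ≤ #(𝒞.biUnion id) := by
  rw [card_biUnion hdisj, mul_comm, ← smul_eq_mul, ← sum_const]
  exact sum_le_sum htwo

theorem exists_ne_zero_of_two_packings [Fintype E] [DecidableEq E] {K : Type*} [Field K]
    {S : Finset E} (hS : S.Nonempty) {𝒞₁ 𝒞₂ : Finset (Finset E)}
    (hdisj₁ : (𝒞₁ : Set (Finset E)).PairwiseDisjoint id)
    (hdisj₂ : (𝒞₂ : Set (Finset E)).PairwiseDisjoint id)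
    (hsub₁ : 𝒞₁.biUnion id ⊆ S) (hsub₂ : 𝒞₂.biUnion id ⊆ S)
    (htwo₁ : ∀ C ∈ 𝒞₁, 2 ≤ #C) (htwo₂ : ∀ C ∈ 𝒞₂, 2 ≤ #C) :
    ∃ d : E → K, d ≠ 0 ∧ (∀ i ∉ S, d i = 0) ∧ ∀ C ∈ 𝒞₁ ∪ 𝒞₂, ∑ e ∈ C, d e = 0 := by
  set outside := Sᶜ.image ({·} : E → Finset E)
  have houtside : ∀ d : E → K, (∀ U ∈ outside, ∑ e ∈ U, d e = 0) → ∀ i ∉ S, d i = 0 :=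
    fun d hd i hi => by simpa using hd {i} (mem_image_of_mem _ (mem_compl.mpr hi))
  have hcard_outside : #outside + #S ≤ Fintype.card E :=
    (Nat.add_le_add_right card_image_le _).trans (card_compl_add_card S).le
  have hcard₁ := two_mul_card_le_card_biUnion hdisj₁ htwo₁
  have hcard₂ := two_mul_card_le_card_biUnion hdisj₂ htwo₂
  have hle₁ := card_le_card hsub₁
  have hle₂ := card_le_card hsub₂
  by_cases hlt : #𝒞₁ + #𝒞₂ < #S
  · obtain ⟨d, hd0, hd⟩ := exists_ne_zero_forall_sum_eq_zero (K := K) (outside ∪ (𝒞₁ ∪ 𝒞₂))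
      (by grw [card_union_le, card_union_le]; omega)
    exact ⟨d, hd0, houtside d fun U hU => hd U (mem_union_left _ hU),
      fun C hC => hd C (mem_union_right _ hC)⟩
  -- Otherwise both families partition `S`, so the constraint of any one class `C₀` follows
  -- from the others.
  have hcover₁ : 𝒞₁.biUnion id = S := eq_of_subset_of_card_le hsub₁ (by omega)
  have hcover₂ : 𝒞₂.biUnion id = S := eq_of_subset_of_card_le hsub₂ (by omega)
  obtain ⟨C₀, hC₀⟩ : 𝒞₂.Nonempty := by
    rw [nonempty_iff_ne_empty]
    rintro rfl
    simp [← hcover₂] at hS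
  obtain ⟨d, hd0, hd⟩ :=
    exists_ne_zero_forall_sum_eq_zero (K := K) (outside ∪ (𝒞₁ ∪ 𝒞₂.erase C₀))
    (by grw [card_union_le, card_union_le]; have := card_erase_add_one hC₀; omega)
  have hsum₁ : ∑ e ∈ S, d e = 0 := by
    rw [← hcover₁, sum_biUnion hdisj₁]
    exact sum_eq_zero fun C hC => hd C (by simp [hC])
  have hsum₂ : ∑ e ∈ S, d e = ∑ C ∈ 𝒞₂.erase C₀, ∑ e ∈ C, d e + ∑ e ∈ C₀, d e := by
    rw [← hcover₂, sum_biUnion hdisj₂, sum_erase_add _ _ hC₀]; rfl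
  have hrest : ∀ C ∈ 𝒞₂.erase C₀, ∑ e ∈ C, d e = 0 := fun C hC => hd C (by simp [hC])
  refine ⟨d, hd0, houtside d fun U hU => hd U (mem_union_left _ hU), fun C hC => ?_⟩
  rcases mem_union.mp hC with hC | hC
  · exact hd C (by simp [hC])
  · by_cases hCC₀ : C = C₀
    · subst hCC₀
      simpa [sum_eq_zero hrest, hsum₁] using hsum₂.symm
    · exact hrest C (mem_erase.mpr ⟨hCC₀, hC⟩)

end Packings

theorem Finpartition.mem_iff_of_mem_atomise {α : Type*} [DecidableEq α] {s : Finset α}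
    {F : Finset (Finset α)} {C : Finset α} (hC : C ∈ (Finpartition.atomise s F).parts) {i j : α}
    (hi : i ∈ C) : j ∈ C ↔ j ∈ s ∧ ∀ u ∈ F, (i ∈ u ↔ j ∈ u) := by
  obtain ⟨-, Q, -, rfl⟩ := Finpartition.mem_atomise.mp hC
  simp only [mem_filter] at hi ⊢
  exact ⟨fun ⟨hj, hQ⟩ => ⟨hj, fun u hu => (hi.2 u hu).symm.trans (hQ u hu)⟩,
    fun ⟨hj, h⟩ => ⟨hj, fun u hu => (hi.2 u hu).trans (h u hu)⟩⟩

theorem Finpartition.inter_eq_biUnion_filter_atomise {α : Type*} [DecidableEq α] {s : Finset α}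
    {F : Finset (Finset α)} {U : Finset α} (hU : U ∈ F) :
    U ∩ s = {C ∈ (Finpartition.atomise s F).parts | C ⊆ U}.biUnion id := by
  ext j
  simp only [mem_inter, mem_biUnion, mem_filter, id]
  constructor
  · rintro ⟨hjU, hjs⟩
    obtain ⟨C, hC, hjC⟩ := (Finpartition.atomise s F).exists_mem hjs
    exact ⟨C, ⟨hC, fun k hk => ((mem_iff_of_mem_atomise hC hjC).mp hk).2 U hU |>.mp hjU⟩, hjC⟩
  · rintro ⟨C, ⟨hC, hCU⟩, hjC⟩
    exact ⟨hCU hjC, (Finpartition.atomise s F).le hC hjC⟩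

open Classical in
noncomputable def fractionalCoords {E : Type*} [Fintype E] (z : E → ℝ) : Finset E :=
  {i | ¬ ∃ m : ℤ, z i = m}

theorem mem_fractionalCoords {E : Type*} [Fintype E] {z : E → ℝ} {i : E} :
    i ∈ fractionalCoords z ↔ ¬ ∃ m : ℤ, z i = m := by
  simp [fractionalCoords]

section Atoms
variable {E : Type*} [DecidableEq E]

def activeAtoms (S : Finset E) (T : Finset (Finset E)) : Finset (Finset E) :=
  {C ∈ (Finpartition.atomise S T).parts | ∃ U ∈ T, C ⊆ U}

theorem pairwiseDisjoint_activeAtoms (S : Finset E) (T : Finset (Finset E)) :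
    (activeAtoms S T : Set (Finset E)).PairwiseDisjoint id :=
  (Finpartition.disjoint _).subset (coe_subset.mpr (filter_subset _ _))

theorem biUnion_activeAtoms_subset (S : Finset E) (T : Finset (Finset E)) :
    (activeAtoms S T).biUnion id ⊆ S :=
  biUnion_subset.mpr fun _ hC => (Finpartition.atomise S T).le (mem_filter.mp hC).1

theorem sum_eq_zero_of_forall_activeAtoms {S U : Finset E} {T : Finset (Finset E)} (hU : U ∈ T)
    {β : Type*} [AddCommMonoid β] {d : E → β} (hout : ∀ i ∉ S, d i = 0)
    (hatoms : ∀ C ∈ activeAtoms S T, ∑ e ∈ C, d e = 0) :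
    ∑ e ∈ U, d e = 0 := by
  rw [← sum_inter_add_sum_sdiff U S, sum_eq_zero fun i hi => hout i (mem_sdiff.mp hi).2,
    Finpartition.inter_eq_biUnion_filter_atomise hU,
    sum_biUnion ((Finpartition.disjoint _).subset (coe_subset.mpr (filter_subset _ _)))]
  simpa using sum_eq_zero fun C hC =>
    hatoms C (mem_filter.mpr ⟨(mem_filter.mp hC).1, U, hU, (mem_filter.mp hC).2⟩)

theorem exists_eq_filter_sdiff_of_mem_activeAtoms {S : Finset E} {T : Finset (Finset E)}
    (hT : ∀ A ∈ T, ∀ B ∈ T, A ∪ B ∈ T ∧ A ∩ B ∈ T) {C : Finset E} (hC : C ∈ activeAtoms S T) :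
    ∃ M ∈ T, ∃ V : Finset E, (V = ∅ ∨ V ∈ T) ∧ V ⊆ M ∧ C = {j ∈ M \ V | j ∈ S} := by
  obtain ⟨hC, U, hU, hCU⟩ := mem_filter.mp hC
  obtain ⟨i, hi⟩ := (Finpartition.mem_atomise.mp hC).1
  -- `M` is the smallest member of `T` containing `i`, `V` the union of those not containing it.
  have hne : (T.filter (i ∈ ·)).Nonempty := ⟨U, mem_filter.mpr ⟨hU, hCU hi⟩⟩
  set M := (T.filter (i ∈ ·)).inf' hne id
  set V := (T.filter (i ∉ ·)).sup (· ∩ M)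
  have hM : M ∈ T :=
    inf'_mem (T : Set (Finset E)) (fun A hA B hB => (hT A hA B hB).2) _ _ _
      fun W hW => (mem_filter.mp hW).1
  refine ⟨M, hM, V, ?_, Finset.sup_le fun W _ => inter_subset_right, ?_⟩
  · refine sup_induction (p := fun W => W = ∅ ∨ W ∈ T) (Or.inl rfl) (fun A hA B hB => ?_)
      fun W hW => Or.inr (hT W (mem_filter.mp hW).1 M hM).2
    rcases hA with rfl | hA
    · simpa using hB
    rcases hB with rfl | hB
    · simpa using Or.inr hA
    exact Or.inr (hT A hA B hB).1
  have hmemM : ∀ j, j ∈ M ↔ ∀ W ∈ T, i ∈ W → j ∈ W := fun j => by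
    simp [M, mem_inf' hne]
  have hmemV : ∀ j, j ∈ V ↔ ∃ W ∈ T, i ∉ W ∧ j ∈ W ∧ j ∈ M := fun j => by
    simp [V, Finset.mem_sup, and_assoc]
  ext j
  rw [Finpartition.mem_iff_of_mem_atomise hC hi, mem_filter, Finset.mem_sdiff, hmemM, hmemV]
  constructor
  · rintro ⟨hjS, h⟩
    exact ⟨⟨fun W hW hiW => (h W hW).mp hiW,
      fun ⟨W, hW, hiW, hjW, _⟩ => hiW ((h W hW).mpr hjW)⟩, hjS⟩
  · rintro ⟨⟨hjM, hjV⟩, hjS⟩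
    refine ⟨hjS, fun W hW => ⟨hjM W hW, fun hjW => ?_⟩⟩
    by_contra hiW
    exact hjV ⟨W, hW, hiW, hjW, (hmemM j).mpr hjM⟩

theorem two_le_card_of_mem_activeAtoms [Fintype E] {z : E → ℝ} {T : Finset (Finset E)}
    (hT : ∀ A ∈ T, ∀ B ∈ T, A ∪ B ∈ T ∧ A ∩ B ∈ T)
    (hz : ∀ U ∈ T, ∃ m : ℤ, ∑ e ∈ U, z e = m)
    {C : Finset E} (hC : C ∈ activeAtoms (fractionalCoords z) T) : 2 ≤ #C := by
  set S := fractionalCoords z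
  obtain ⟨i, hi⟩ := (Finpartition.mem_atomise.mp (mem_filter.mp hC).1).1
  have hiS : i ∈ S := biUnion_activeAtoms_subset S T (mem_biUnion.mpr ⟨C, hC, hi⟩)
  obtain ⟨M, hM, V, hV, hVM, hCeq⟩ := exists_eq_filter_sdiff_of_mem_activeAtoms hT hC
  set R := (Int.castRingHom ℝ).range
  have hR : ∀ x : ℝ, x ∈ R ↔ ∃ m : ℤ, x = m := fun x => by simp [R, eq_comm]
  have hMV : ∑ e ∈ M \ V, z e ∈ R := by
    rw [sum_sdiff_eq_sub hVM]
    refine R.sub_mem ((hR _).mpr (hz M hM)) ?_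
    rcases hV with hV | hV
    · simp [hV]
    · exact (hR _).mpr (hz V hV)
  have hintegral : ∑ e ∈ M \ V with e ∉ S, z e ∈ R :=
    R.sum_mem fun e he => (hR _).mpr (not_not.mp (mem_fractionalCoords.not.mp (mem_filter.mp he).2))
  obtain ⟨m, hm⟩ := (hR _).mp (show ∑ e ∈ C, z e ∈ R by
    rw [hCeq, ← add_sub_cancel_right (∑ e ∈ M \ V with e ∈ S, z e) (∑ e ∈ M \ V with e ∉ S, z e),
      sum_filter_add_sum_filter_not]
    exact R.sub_mem hMV hintegral)
  by_contra hlt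
  have hCi : C = {i} :=
    eq_singleton_iff_unique_mem.mpr ⟨hi, fun j hj => card_le_one.mp (by omega) j hj i hi⟩
  rw [hCi, sum_singleton] at hm
  exact mem_fractionalCoords.mp hiS ⟨m, hm⟩

theorem exists_perturbation [Fintype E] {z : E → ℝ} (hz : ¬ IsIntegerVec z)
    {T₁ T₂ : Finset (Finset E)}
    (hT₁ : ∀ A ∈ T₁, ∀ B ∈ T₁, A ∪ B ∈ T₁ ∧ A ∩ B ∈ T₁)
    (hT₂ : ∀ A ∈ T₂, ∀ B ∈ T₂, A ∪ B ∈ T₂ ∧ A ∩ B ∈ T₂)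
    (hz₁ : ∀ U ∈ T₁, ∃ m : ℤ, ∑ e ∈ U, z e = m) (hz₂ : ∀ U ∈ T₂, ∃ m : ℤ, ∑ e ∈ U, z e = m) :
    ∃ d : E → ℝ, d ≠ 0 ∧ (∀ i, (∃ m : ℤ, z i = m) → d i = 0) ∧
      (∀ U ∈ T₁, ∑ e ∈ U, d e = 0) ∧ ∀ U ∈ T₂, ∑ e ∈ U, d e = 0 := by
  set S := fractionalCoords z
  have hS : S.Nonempty := by
    obtain ⟨i, hi⟩ := not_forall.mp hz
    exact ⟨i, mem_fractionalCoords.mpr hi⟩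
  obtain ⟨d, hd0, hout, hatoms⟩ := exists_ne_zero_of_two_packings (K := ℝ) hS
    (pairwiseDisjoint_activeAtoms S T₁) (pairwiseDisjoint_activeAtoms S T₂)
    (biUnion_activeAtoms_subset S T₁) (biUnion_activeAtoms_subset S T₂)
    (fun _ => two_le_card_of_mem_activeAtoms hT₁ hz₁)
    (fun _ => two_le_card_of_mem_activeAtoms hT₂ hz₂)
  refine ⟨d, hd0, fun i hi => hout i (mt mem_fractionalCoords.mp (not_not.mpr hi)),
    fun U hU => ?_, fun U hU => ?_⟩
  · exact sum_eq_zero_of_forall_activeAtoms hU hout fun C hC => hatoms C (mem_union_left _ hC)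
  · exact sum_eq_zero_of_forall_activeAtoms hU hout fun C hC => hatoms C (mem_union_right _ hC)

end Atoms

section ExtendedPolymatroid
variable {E : Type*}

def extendedPolymatroid (f : Finset E → ℤ) : Set (E → ℝ) := {x | ∀ U, ∑ e ∈ U, x e ≤ (f U : ℝ)}

theorem isClosed_extendedPolymatroid (f : Finset E → ℤ) : IsClosed (extendedPolymatroid f) := by
  simp only [extendedPolymatroid, Set.ofPred_forall]
  exact isClosed_iInter fun U => isClosed_le (by fun_prop) continuous_const

theorem smul_extendedPolymatroid {r : ℕ} (hr : 0 < r) (f : Finset E → ℤ) :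
    (r : ℝ) • extendedPolymatroid f = extendedPolymatroid (r • f) := by
  ext x
  rw [Set.mem_smul_set_iff_inv_smul_mem₀ (by positivity)]
  simp [extendedPolymatroid, ← mul_sum, inv_mul_le_iff₀ (show (0 : ℝ) < r by positivity)]

theorem Submodular.nsmul [DecidableEq E] {f : Finset E → ℤ} (hf : Submodular f) (r : ℕ) :
    Submodular (r • f) := fun A B => by
  simpa [mul_add] using mul_le_mul_of_nonneg_left (hf A B) (Int.natCast_nonneg r)

open Classical in
noncomputable def tightSets [Fintype E] (f : Finset E → ℤ) (x : E → ℝ) : Finset (Finset E) :=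
  {U | ∑ e ∈ U, x e = f U}

theorem mem_tightSets [Fintype E] {f : Finset E → ℤ} {x : E → ℝ} {U : Finset E} :
    U ∈ tightSets f x ↔ ∑ e ∈ U, x e = f U := by
  simp [tightSets]

theorem union_mem_tightSets_and_inter_mem [Fintype E] [DecidableEq E] {f : Finset E → ℤ}
    (hf : Submodular f) {x : E → ℝ} (hx : x ∈ extendedPolymatroid f) {A B : Finset E}
    (hA : A ∈ tightSets f x) (hB : B ∈ tightSets f x) :
    A ∪ B ∈ tightSets f x ∧ A ∩ B ∈ tightSets f x := by
  simp only [mem_tightSets] at *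
  have hmod : ∑ e ∈ A ∪ B, x e + ∑ e ∈ A ∩ B, x e = ∑ e ∈ A, x e + ∑ e ∈ B, x e :=
    sum_union_inter
  have hsub : (f (A ∪ B) : ℝ) + f (A ∩ B) ≤ f A + f B := by exact_mod_cast hf A B
  have := hx (A ∪ B)
  have := hx (A ∩ B)
  constructor <;> linarith

theorem eventually_add_smul_mem_extendedPolymatroid [Fintype E] {f : Finset E → ℤ}
    {x v : E → ℝ} (hx : x ∈ extendedPolymatroid f)
    (hv : ∀ U ∈ tightSets f x, ∑ e ∈ U, v e = 0) :
    ∀ᶠ t in 𝓝 (0 : ℝ), x + t • v ∈ extendedPolymatroid f := by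
  refine eventually_all.mpr fun U => ?_
  simpa [sum_add_distrib, ← mul_sum] using
    eventually_add_mul_le (hx U) fun h => hv U (mem_tightSets.mpr h)

end ExtendedPolymatroid

section Sandwich
variable {E : Type*} [Fintype E] [DecidableEq E] {g h : Finset E → ℤ}

theorem isIntegerVec_of_mem_extremePoints (hg : Submodular g) (hh : Submodular h)
    {w c d : E → ℤ} {z : E → ℝ}
    (hz : z ∈ Set.extremePoints ℝ {x ∈ extendedPolymatroid g ∩
      (fun y => (fun i => (w i : ℝ)) - y) ⁻¹' extendedPolymatroid h |
        ∀ i, (c i : ℝ) ≤ x i ∧ x i ≤ d i}) :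
    IsIntegerVec z := by
  set W : E → ℝ := fun i => w i
  obtain ⟨⟨hzg, hzh⟩, hzbox⟩ := hz.1
  by_contra hzint
  obtain ⟨v, hv0, hvint, hvg, hvh⟩ :=
    exists_perturbation hzint (T₁ := tightSets g z) (T₂ := tightSets h (W - z))
      (fun _ hA _ hB => union_mem_tightSets_and_inter_mem hg hzg hA hB)
      (fun _ hA _ hB => union_mem_tightSets_and_inter_mem hh hzh hA hB)
      (fun U hU => ⟨g U, mem_tightSets.mp hU⟩)
      (fun U hU => ⟨∑ e ∈ U, w e - h U, by
        have := mem_tightSets.mp hU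
        simp only [Pi.sub_apply, sum_sub_distrib, W] at this
        push_cast
        linarith⟩)
  refine hv0 (eq_zero_of_mem_extremePoints hz ?_)
  filter_upwards [eventually_add_smul_mem_extendedPolymatroid hzg hvg,
    eventually_add_smul_mem_extendedPolymatroid (v := -v) hzh fun U hU => by simp [hvh U hU],
    eventually_add_smul_mem_box hzbox hvint] with t hzg' hzh' hzbox'
  refine ⟨⟨hzg', ?_⟩, hzbox'⟩
  rw [Set.mem_preimage, show W - (z + t • v) = W - z + t • -v by module]
  exact hzh'

theorem isBoxInteger_inter_image_sub (hg : Submodular g) (hh : Submodular h) (w : E → ℤ) :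
    IsBoxInteger (extendedPolymatroid g ∩
      (fun y => (fun i => (w i : ℝ)) - y) '' extendedPolymatroid h) := by
  intro c d _
  rw [Set.image_eq_preimage_of_inverse (sub_sub_cancel _) (sub_sub_cancel _)]
  refine IsIntegerPolyhedron.of_extremePoints (isCompact_sep_box ?_ _ _)
    fun z hz => isIntegerVec_of_mem_extremePoints hg hh hz
  exact (isClosed_extendedPolymatroid g).inter
    ((isClosed_extendedPolymatroid h).preimage (by fun_prop))

end Sandwich

/-- The extended polymatroid `EP_f = {x | x(U) ≤ f(U) for all U ⊆ E}`
of a submodular function `f` satisfies condition (★). -/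
theorem extendedPolymatroid_conditionStar {E : Type*} [Fintype E] [DecidableEq E]
    (f : Finset E → ℤ) (hf : Submodular f) :
    ConditionStar {x : E → ℝ | ∀ U : Finset E, ∑ e ∈ U, x e ≤ (f U : ℝ)} := by
  intro k r _ w
  obtain rfl | hr := Nat.eq_zero_or_pos r
  · refine IsBoxInteger.of_forall_isIntegerVec ?_
    rintro x ⟨hx, -⟩
    obtain ⟨y, -, rfl⟩ := Set.mem_smul_set.mp hx
    exact fun i => ⟨0, by simp⟩
  obtain hkr | hkr := Nat.eq_zero_or_pos (k - r)
  · refine IsBoxInteger.of_forall_isIntegerVec ?_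
    rintro x ⟨-, y, hy, rfl⟩
    obtain ⟨u, -, rfl⟩ := Set.mem_smul_set.mp hy
    exact fun i => ⟨w i, by simp [hkr]⟩
  have := isBoxInteger_inter_image_sub (hf.nsmul r) (hf.nsmul (k - r)) w
  rwa [← smul_extendedPolymatroid hr, ← smul_extendedPolymatroid hkr] at this
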